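/- The transition relation preserves asynchrony: if <s,g> --λ-->_p <s',g'> and isAsync(s), then isAsync(s'). Equivalently, if isSync(s') then isSync(s). -/

import Mathlib

namespace TX10

abbrev Place := ℕ
abbrev VarName := ℕ
abbrev FieldName := ℕ
/-- Object identifiers: a home place together with a serial number. -/
abbrev ObjId := Place × ℕ

/-- The home place of an object id. -/
def home (o : ObjId) : Place := o.1

/-- Values: local object references, global references `o$home(o)`,
and the exception constants E, BadFieldSelection, BadGlobalRef, DeadPlaceException. -/
inductive Val : Type where
  | obj (o : ObjId)
  | gref (o : ObjId)
  | exE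
  | exBF
  | exBG
  | exDP
deriving DecidableEq

inductive Expr : Type where
  | val (v : Val)
  | var (x : VarName)
  | select (e : Expr) (f : FieldName)
  | newObj (fs : List (FieldName × Expr))
  | globalref (e : Expr)
  | valof (e : Expr)
deriving Inhabited

/-- Statements of TX10 (including the dynamic statements `atD` and `spawned`). -/
inductive Stmt : Type where
  | skip
  | throw (v : Val)
  | bind (x : VarName) (e : Expr) (s : Stmt)          -- val x = e s
  | assign (e1 : Expr) (f : FieldName) (e2 : Expr)    -- e1.f = e2
  | seq (s t : Stmt)                                  -- {s t}
  | atE (p : Place) (x : VarName) (e : Expr) (s : Stmt)  -- at(p)(val x = e) s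
  | async (s : Stmt)
  | finish (μ : List Val) (s : Stmt)                  -- finish_μ s
  | tryCatch (s t : Stmt)
  | atD (p : Place) (s : Stmt)                        -- dynamic at
  | spawned (s : Stmt)                                -- dynamic async
deriving Inhabited

/-- The asynchrony predicate (least such predicate). -/
inductive isAsync : Stmt → Prop where
  | spawned (s : Stmt) : isAsync (.spawned s)
  | atD {s : Stmt} (p : Place) : isAsync s → isAsync (.atD p s)
  | tryCatch {s : Stmt} (t : Stmt) : isAsync s → isAsync (.tryCatch s t)
  | seq {s t : Stmt} : isAsync s → isAsync t → isAsync (.seq s t)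

/-- The synchrony predicate (least such predicate). -/
inductive isSync : Stmt → Prop where
  | skip : isSync .skip
  | throw (v : Val) : isSync (.throw v)
  | bind (x : VarName) (e : Expr) (s : Stmt) : isSync (.bind x e s)
  | assign (e1 : Expr) (f : FieldName) (e2 : Expr) : isSync (.assign e1 f e2)
  | atE (p : Place) (x : VarName) (e : Expr) (s : Stmt) : isSync (.atE p x e s)
  | async (s : Stmt) : isSync (.async s)
  | finish (μ : List Val) (s : Stmt) : isSync (.finish μ s)
  | seqL {s : Stmt} (t : Stmt) : isSync s → isSync (.seq s t)
  | seqR {s : Stmt} (t : Stmt) : isSync s → isSync (.seq t s)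
  | atD {s : Stmt} (p : Place) : isSync s → isSync (.atD p s)
  | tryCatch {s : Stmt} (t : Stmt) : isSync s → isSync (.tryCatch s t)

/-- Objects: partial maps from field names to values. -/
abbrev Obj := FieldName → Option Val
/-- Local heaps: partial maps from object ids to objects. -/
abbrev Heap := ObjId → Option Obj
/-- Global heaps: partial maps from places to local heaps;
`g p = none` means place `p` is failed (or absent). -/
abbrev GHeap := Place → Option Heap

/-- Transition labels: ε, asynchronous exception v×, synchronous exception v⊗. -/
inductive Label : Type where
  | eps
  | excA (v : Val)
  | excS (v : Val)
deriving DecidableEq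

def substE (x : VarName) (v : Val) : Expr → Expr
  | .val w => .val w
  | .var y => if y = x then .val v else .var y
  | .select e f => .select (substE x v e) f
  | .newObj fs => .newObj (fs.attach.map (fun fe => (fe.1.1, substE x v fe.1.2)))
  | .globalref e => .globalref (substE x v e)
  | .valof e => .valof (substE x v e)
decreasing_by
  all_goals simp_wf
  all_goals try omega
  all_goals
    (obtain ⟨⟨f1, e1⟩, hmem⟩ := fe
     have := List.sizeOf_lt_of_mem hmem
     simp at this ⊢
     omega)

/-- Capture-respecting substitution `s[v/x]` (variables declared in the program are distinct). -/
def subst (x : VarName) (v : Val) : Stmt → Stmt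
  | .skip => .skip
  | .throw w => .throw w
  | .bind y e s => .bind y (substE x v e) (if y = x then s else subst x v s)
  | .assign e1 f e2 => .assign (substE x v e1) f (substE x v e2)
  | .seq s t => .seq (subst x v s) (subst x v t)
  | .atE p y e s => .atE p y (substE x v e) (if y = x then s else subst x v s)
  | .async s => .async (subst x v s)
  | .finish μ s => .finish μ (subst x v s)
  | .tryCatch s t => .tryCatch (subst x v s) (subst x v t)
  | .atD p s => .atD p (subst x v s)
  | .spawned s => .spawned (subst x v s)

/-- Local reachability in a heap: `Reach h v w` means `w` is reachable from `v`
through the fields of objects in `h`. -/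
inductive Reach (h : Heap) : Val → Val → Prop where
  | refl (v : Val) : Reach h v v
  | step {v : Val} {o : ObjId} {r : Obj} {f : FieldName} {w : Val} :
      Reach h v (.obj o) → h o = some r → r f = some w → Reach h v w

/-- Isomorphism of object graphs rooted at `v1` in `h1` and `v2` in `h2`,
witnessed by `ι`, which is the identity on global references. -/
structure GraphIso (h1 : Heap) (v1 : Val) (h2 : Heap) (v2 : Val) (ι : Val → Val) : Prop where
  root : ι v1 = v2
  reach : ∀ w, Reach h1 v1 w → Reach h2 v2 (ι w)
  inj : ∀ w w', Reach h1 v1 w → Reach h1 v1 w' → ι w = ι w' → w = w'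
  surj : ∀ u, Reach h2 v2 u → ∃ w, Reach h1 v1 w ∧ ι w = u
  fields : ∀ a r, Reach h1 v1 (Val.obj a) → h1 a = some r →
      ∃ a' r', ι (Val.obj a) = Val.obj a' ∧ h2 a' = some r' ∧ ∀ f, (r f).map ι = r' f
  grefFix : ∀ a, Reach h1 v1 (Val.gref a) → ι (Val.gref a) = Val.gref a

/-- Declarative specification of the copy operation `copy(v,q,g) = ⟨v',g'⟩`. -/
inductive CopySpec : Val → Place → GHeap → Val → GHeap → Prop where
  | nonObj (v : Val) (q : Place) (g : GHeap) :
      (∀ o : ObjId, v ≠ Val.obj o) → CopySpec v q g v g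
  | obj {o : ObjId} {q : Place} {g : GHeap} {h hsrc h' : Heap} {o' : ObjId} {ι : Val → Val} :
      g q = some h →
      g (home o) = some hsrc →
      (∀ a r, h a = some r → h' a = some r) →                -- h' extends h
      (∀ a : ObjId, h a = none → h' a ≠ none → home a = q) → -- fresh ids live at q
      h o' = none → h' o' ≠ none →                           -- o' is a fresh id
      GraphIso hsrc (Val.obj o) h' (Val.obj o') ι →
      (∀ w, Reach h' (Val.obj o') w →
        (∃ a : ObjId, w = Val.obj a ∧ h a = none ∧ h' a ≠ none) ∨ (∀ a : ObjId, w ≠ Val.obj a)) →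
      CopySpec (Val.obj o) q g (Val.obj o') (Function.update g q (some h'))

/-- Expression configurations: either `⟨e,h⟩` or a terminal heap (after a failure). -/
inductive EConf : Type where
  | run (e : Expr) (h : Heap)
  | done (h : Heap)

def initObj (fvs : List (FieldName × Val)) : Obj :=
  fun f => ((fvs.reverse.find? (fun fv => fv.1 == f)).map Prod.snd)

/-- Expression evaluation `⟨e,h⟩ --λ-->_p ⟨e',h'⟩ | h'`. -/
inductive EStep (p : Place) : Expr → Heap → Label → EConf → Prop where
  | newObj {fvs : List (FieldName × Val)} {o : ObjId} {h : Heap} :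
      home o = p → h o = none →
      EStep p (.newObj (fvs.map (fun fv => (fv.1, Expr.val fv.2)))) h .eps
        (.run (.val (.obj o)) (Function.update h o (some (initObj fvs))))
  | select {h : Heap} {o : ObjId} {r : Obj} {f : FieldName} {v : Val} :
      h o = some r → r f = some v →
      EStep p (.select (.val (.obj o)) f) h .eps (.run (.val v) h)
  | selectBad {h : Heap} {o : ObjId} {f : FieldName} :
      ((h o).bind (fun r => r f)) = none →
      EStep p (.select (.val (.obj o)) f) h (.excS .exBF) (.done h)
  | selectBadVal {h : Heap} {v : Val} {f : FieldName} :
      (∀ o : ObjId, v ≠ Val.obj o) →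
      EStep p (.select (.val v) f) h (.excS .exBF) (.done h)
  | globalref {h : Heap} {o : ObjId} : home o = p →
      EStep p (.globalref (.val (.obj o))) h .eps (.run (.val (.gref o)) h)
  | globalrefBad {h : Heap} {v : Val} :
      (∀ o : ObjId, v = Val.obj o → home o ≠ p) →
      EStep p (.globalref (.val v)) h (.excS .exBG) (.done h)
  | valof {h : Heap} {o : ObjId} : home o = p →
      EStep p (.valof (.val (.gref o))) h .eps (.run (.val (.obj o)) h)
  | valofBad {h : Heap} {v : Val} :
      (∀ o : ObjId, v = Val.gref o → home o ≠ p) →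
      EStep p (.valof (.val v)) h (.excS .exBG) (.done h)
  | selectCtx {e : Expr} {h : Heap} {l : Label} {e' : Expr} {h' : Heap} {f : FieldName} :
      EStep p e h l (.run e' h') →
      EStep p (.select e f) h l (.run (.select e' f) h')
  | selectCtxDone {e : Expr} {h : Heap} {l : Label} {h' : Heap} {f : FieldName} :
      EStep p e h l (.done h') →
      EStep p (.select e f) h l (.done h')
  | globalrefCtx {e : Expr} {h : Heap} {l : Label} {e' : Expr} {h' : Heap} :
      EStep p e h l (.run e' h') →
      EStep p (.globalref e) h l (.run (.globalref e') h')
  | globalrefCtxDone {e : Expr} {h : Heap} {l : Label} {h' : Heap} :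
      EStep p e h l (.done h') →
      EStep p (.globalref e) h l (.done h')
  | valofCtx {e : Expr} {h : Heap} {l : Label} {e' : Expr} {h' : Heap} :
      EStep p e h l (.run e' h') →
      EStep p (.valof e) h l (.run (.valof e') h')
  | valofCtxDone {e : Expr} {h : Heap} {l : Label} {h' : Heap} :
      EStep p e h l (.done h') →
      EStep p (.valof e) h l (.done h')
  | newObjCtx {fvs : List (FieldName × Val)} {f : FieldName} {e : Expr}
      {rest : List (FieldName × Expr)} {h : Heap} {l : Label} {e' : Expr} {h' : Heap} :
      EStep p e h l (.run e' h') →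
      EStep p (.newObj (fvs.map (fun fv => (fv.1, Expr.val fv.2)) ++ (f, e) :: rest)) h l
        (.run (.newObj (fvs.map (fun fv => (fv.1, Expr.val fv.2)) ++ (f, e') :: rest)) h')
  | newObjCtxDone {fvs : List (FieldName × Val)} {f : FieldName} {e : Expr}
      {rest : List (FieldName × Expr)} {h : Heap} {l : Label} {h' : Heap} :
      EStep p e h l (.done h') →
      EStep p (.newObj (fvs.map (fun fv => (fv.1, Expr.val fv.2)) ++ (f, e) :: rest)) h l (.done h')

/-- Statement configurations: `⟨s,g⟩` or a terminal global heap `g`. -/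
inductive Config : Type where
  | run (s : Stmt) (g : GHeap)
  | done (g : GHeap)

/-- Exception masking performed by `async`: synchronous exceptions become asynchronous. -/
def maskAsync : Label → Label
  | .eps => .eps
  | .excA v => .excA v
  | .excS v => .excA v

/-- `μ ∪ λ`: recording of an exception label into the state of `finish`. -/
def addLabel (μ : List Val) : Label → List Val
  | .eps => μ
  | .excA v => v :: μ
  | .excS v => v :: μ

/-- Label produced by (End of Finish); `dead` records whether the local place failed. -/
def endLabel (dead : Bool) (μ : List Val) : Label → Label
  | .eps => if μ = [] then .eps else if dead then .excS .exDP else .excS .exE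
  | _ => if dead then .excS .exDP else .excS .exE

/-- Label transformation performed by (At): a remote synchronous exception is masked
by a DeadPlaceException when the home place is failed. -/
def atLabel (dead : Bool) : Label → Label
  | .excS v => if dead then .excS .exDP else .excS v
  | l => l

/-- `l` is not a synchronous-exception label (i.e. `l ∈ {ε, v×}`). -/
def isNotSync : Label → Prop
  | .excS _ => False
  | _ => True

/-- The small-step transition relation `⟨s,g⟩ --λ-->_p ⟨s',g'⟩ | g'`.
The flag `res` enables the additional rules of Resilient TX10 (place failure and the
behaviour of constructs at failed places); with `res = false` (and total heaps) this is
exactly the TX10 semantics. -/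
inductive Step : Bool → Place → Stmt → GHeap → Label → Config → Prop where
  -- (Skip)
  | skip {res : Bool} {p : Place} {g : GHeap} :
      g p ≠ none → Step res p .skip g .eps (.done g)
  -- (Exception)
  | throw {res : Bool} {p : Place} {g : GHeap} {v : Val} :
      g p ≠ none → Step res p (.throw v) g (.excS v) (.done g)
  -- (Declare Val)
  | declVal {res : Bool} {p : Place} {g : GHeap} {x : VarName} {v : Val} {s : Stmt}
      {l : Label} {k : Config} :
      g p ≠ none → Step res p (subst x v s) g l k →
      Step res p (.bind x (.val v) s) g l k
  -- (Field Update)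
  | fieldUpdate {res : Bool} {p : Place} {g : GHeap} {h : Heap} {o : ObjId} {r : Obj}
      {f : FieldName} {v : Val} :
      g p = some h → h o = some r → (r f).isSome →
      Step res p (.assign (.val (.obj o)) f (.val v)) g .eps
        (.done (Function.update g p (some (Function.update h o (some (Function.update r f (some v)))))))
  -- (Bad Field Update)
  | fieldUpdateBad {res : Bool} {p : Place} {g : GHeap} {h : Heap} {o : ObjId}
      {f : FieldName} {v : Val} :
      g p = some h → ((h o).bind (fun r => r f)) = none →
      Step res p (.assign (.val (.obj o)) f (.val v)) g (.excS .exBF) (.done g)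
  | fieldUpdateBadVal {res : Bool} {p : Place} {g : GHeap} {w : Val} {f : FieldName} {e2 : Expr} :
      g p ≠ none → (∀ o : ObjId, w ≠ Val.obj o) →
      Step res p (.assign (.val w) f e2) g (.excS .exBF) (.done g)
  -- (Ctx): expression evaluation inside statements
  | ctxBind {res : Bool} {p : Place} {g : GHeap} {h : Heap} {x : VarName} {e : Expr}
      {s : Stmt} {l : Label} {e' : Expr} {h' : Heap} :
      g p = some h → EStep p e h l (.run e' h') →
      Step res p (.bind x e s) g l (.run (.bind x e' s) (Function.update g p (some h')))
  | ctxBindDone {res : Bool} {p : Place} {g : GHeap} {h : Heap} {x : VarName} {e : Expr}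
      {s : Stmt} {l : Label} {h' : Heap} :
      g p = some h → EStep p e h l (.done h') →
      Step res p (.bind x e s) g l (.done (Function.update g p (some h')))
  | ctxAssignL {res : Bool} {p : Place} {g : GHeap} {h : Heap} {e1 : Expr} {f : FieldName}
      {e2 : Expr} {l : Label} {e1' : Expr} {h' : Heap} :
      g p = some h → EStep p e1 h l (.run e1' h') →
      Step res p (.assign e1 f e2) g l (.run (.assign e1' f e2) (Function.update g p (some h')))
  | ctxAssignLDone {res : Bool} {p : Place} {g : GHeap} {h : Heap} {e1 : Expr} {f : FieldName}
      {e2 : Expr} {l : Label} {h' : Heap} :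
      g p = some h → EStep p e1 h l (.done h') →
      Step res p (.assign e1 f e2) g l (.done (Function.update g p (some h')))
  | ctxAssignR {res : Bool} {p : Place} {g : GHeap} {h : Heap} {o : ObjId} {f : FieldName}
      {e2 : Expr} {l : Label} {e2' : Expr} {h' : Heap} :
      g p = some h → EStep p e2 h l (.run e2' h') →
      Step res p (.assign (.val (.obj o)) f e2) g l
        (.run (.assign (.val (.obj o)) f e2') (Function.update g p (some h')))
  | ctxAssignRDone {res : Bool} {p : Place} {g : GHeap} {h : Heap} {o : ObjId} {f : FieldName}
      {e2 : Expr} {l : Label} {h' : Heap} :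
      g p = some h → EStep p e2 h l (.done h') →
      Step res p (.assign (.val (.obj o)) f e2) g l (.done (Function.update g p (some h')))
  | ctxAtE {res : Bool} {p q : Place} {g : GHeap} {h : Heap} {x : VarName} {e : Expr}
      {s : Stmt} {l : Label} {e' : Expr} {h' : Heap} :
      g p = some h → EStep p e h l (.run e' h') →
      Step res p (.atE q x e s) g l (.run (.atE q x e' s) (Function.update g p (some h')))
  | ctxAtEDone {res : Bool} {p q : Place} {g : GHeap} {h : Heap} {x : VarName} {e : Expr}
      {s : Stmt} {l : Label} {h' : Heap} :
      g p = some h → EStep p e h l (.done h') →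
      Step res p (.atE q x e s) g l (.done (Function.update g p (some h')))
  -- (Place Shift)
  | placeShift {res : Bool} {p q : Place} {g : GHeap} {x : VarName} {v v' : Val}
      {s : Stmt} {g' : GHeap} :
      g p ≠ none → g q ≠ none → CopySpec v q g v' g' →
      Step res p (.atE q x (.val v) s) g .eps
        (.run (.atD q (.seq (subst x v' s) .skip)) g')
  | placeShiftDeadTgt {p q : Place} {g : GHeap} {x : VarName} {e : Expr} {s : Stmt} :
      g q = none →
      Step true p (.atE q x e s) g (.excS .exDP) (.done g)
  | placeShiftDeadSrc {p q : Place} {g : GHeap} {x : VarName} {e : Expr} {s : Stmt} :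
      g p = none →
      Step true p (.atE q x e s) g (.excS .exDP) (.done g)
  -- (Spawn)
  | spawn {res : Bool} {p : Place} {g : GHeap} {s : Stmt} :
      g p ≠ none → Step res p (.async s) g .eps (.run (.spawned s) g)
  | spawnDead {p : Place} {g : GHeap} {s : Stmt} :
      g p = none → Step true p (.async s) g (.excS .exDP) (.done g)
  -- (Async)
  | asyncRun {res : Bool} {p : Place} {s : Stmt} {g : GHeap} {l : Label} {s' : Stmt} {g' : GHeap} :
      Step res p s g l (.run s' g') →
      Step res p (.spawned s) g (maskAsync l) (.run (.spawned s') g')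
  | asyncDone {res : Bool} {p : Place} {s : Stmt} {g : GHeap} {l : Label} {g' : GHeap} :
      Step res p s g l (.done g') →
      Step res p (.spawned s) g (maskAsync l) (.done g')
  -- (Finish)
  | finishStep {res : Bool} {p : Place} {s : Stmt} {g : GHeap} {l : Label} {s' : Stmt}
      {g' : GHeap} {μ : List Val} :
      Step res p s g l (.run s' g') →
      Step res p (.finish μ s) g .eps (.run (.finish (addLabel μ l) s') g')
  -- (End of Finish)
  | finishEnd {res : Bool} {p : Place} {s : Stmt} {g : GHeap} {l : Label} {g' : GHeap}
      {μ : List Val} :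
      Step res p s g l (.done g') →
      Step res p (.finish μ s) g (endLabel (g p).isNone μ l) (.done g')
  -- (Seq)
  | seqStep {res : Bool} {p : Place} {s : Stmt} {g : GHeap} {l : Label} {s' : Stmt}
      {g' : GHeap} {t : Stmt} :
      Step res p s g l (.run s' g') → isNotSync l →
      Step res p (.seq s t) g l (.run (.seq s' t) g')
  | seqStepSync {res : Bool} {p : Place} {s : Stmt} {g : GHeap} {v : Val} {s' : Stmt}
      {g' : GHeap} {t : Stmt} :
      Step res p s g (.excS v) (.run s' g') →
      Step res p (.seq s t) g (.excS v) (.run s' g')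
  -- (Seq Term)
  | seqTerm {res : Bool} {p : Place} {s : Stmt} {g : GHeap} {l : Label} {g' : GHeap} {t : Stmt} :
      g p ≠ none → Step res p s g l (.done g') → isNotSync l →
      Step res p (.seq s t) g l (.run t g')
  | seqTermSync {res : Bool} {p : Place} {s : Stmt} {g : GHeap} {v : Val} {g' : GHeap} {t : Stmt} :
      g p ≠ none → Step res p s g (.excS v) (.done g') →
      Step res p (.seq s t) g (.excS v) (.done g')
  -- (Par)
  | par {res : Bool} {p : Place} {s : Stmt} {g : GHeap} {l : Label} {s' : Stmt}
      {g' : GHeap} {t : Stmt} :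
      isAsync t → Step res p s g l (.run s' g') →
      Step res p (.seq t s) g l (.run (.seq t s') g')
  | parTerm {res : Bool} {p : Place} {s : Stmt} {g : GHeap} {l : Label} {g' : GHeap} {t : Stmt} :
      isAsync t → Step res p s g l (.done g') →
      Step res p (.seq t s) g l (.run t g')
  -- (Seq Failed Term)
  | seqFailedSync {p : Place} {s : Stmt} {g : GHeap} {l : Label} {g' : GHeap} {t : Stmt} :
      g p = none → isSync s → Step true p s g l (.done g') →
      Step true p (.seq s t) g (.excS .exDP) (.done g')
  | seqFailedAsync {p : Place} {s : Stmt} {g : GHeap} {l : Label} {g' : GHeap} {t : Stmt} :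
      g p = none → isAsync s → Step true p s g l (.done g') →
      Step true p (.seq s t) g (.excA .exDP) (.run t g')
  -- (At)
  | atRun {res : Bool} {p q : Place} {s : Stmt} {g : GHeap} {l : Label} {s' : Stmt} {g' : GHeap} :
      Step res q s g l (.run s' g') →
      Step res p (.atD q s) g (atLabel (g p).isNone l) (.run (.atD q s') g')
  | atDone {res : Bool} {p q : Place} {s : Stmt} {g : GHeap} {l : Label} {g' : GHeap} :
      Step res q s g l (.done g') →
      Step res p (.atD q s) g (atLabel (g p).isNone l) (.done g')
  -- (Try)
  | tryStep {res : Bool} {p : Place} {s : Stmt} {g : GHeap} {l : Label} {s' : Stmt}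
      {g' : GHeap} {t : Stmt} :
      Step res p s g l (.run s' g') → isNotSync l →
      Step res p (.tryCatch s t) g l (.run (.tryCatch s' t) g')
  | tryStepDone {res : Bool} {p : Place} {s : Stmt} {g : GHeap} {l : Label} {g' : GHeap} {t : Stmt} :
      Step res p s g l (.done g') → isNotSync l →
      Step res p (.tryCatch s t) g l (.done g')
  | tryHandle {res : Bool} {p : Place} {s : Stmt} {g : GHeap} {v : Val} {s' : Stmt}
      {g' : GHeap} {t : Stmt} :
      g p ≠ none → Step res p s g (.excS v) (.run s' g') →
      Step res p (.tryCatch s t) g .eps (.run (.seq s' t) g')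
  | tryHandleDone {res : Bool} {p : Place} {s : Stmt} {g : GHeap} {v : Val} {g' : GHeap} {t : Stmt} :
      g p ≠ none → Step res p s g (.excS v) (.done g') →
      Step res p (.tryCatch s t) g .eps (.run t g')
  | tryDead {p : Place} {s : Stmt} {g : GHeap} {v : Val} {s' : Stmt} {g' : GHeap} {t : Stmt} :
      g p = none → Step true p s g (.excS v) (.run s' g') →
      Step true p (.tryCatch s t) g (.excS v) (.run s' g')
  | tryDeadDone {p : Place} {s : Stmt} {g : GHeap} {v : Val} {g' : GHeap} {t : Stmt} :
      g p = none → Step true p s g (.excS v) (.done g') →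
      Step true p (.tryCatch s t) g (.excS v) (.done g')
  -- (Place Failure): any non-zero live place may fail at any moment
  | placeFailure {p : Place} {s : Stmt} {g : GHeap} :
      p ≠ 0 → g p ≠ none →
      Step true p s g .eps (.run s (Function.update g p none))
  -- (Local Failure): basic statements at a failed place
  | localSkip {p : Place} {g : GHeap} :
      g p = none → Step true p .skip g (.excS .exDP) (.done g)
  | localThrow {p : Place} {g : GHeap} {v : Val} :
      g p = none → Step true p (.throw v) g (.excS .exDP) (.done g)
  | localBind {p : Place} {g : GHeap} {x : VarName} {e : Expr} {s : Stmt} :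
      g p = none → Step true p (.bind x e s) g (.excS .exDP) (.done g)
  | localAssign {p : Place} {g : GHeap} {e1 : Expr} {f : FieldName} {e2 : Expr} :
      g p = none → Step true p (.assign e1 f e2) g (.excS .exDP) (.done g)

/-- Closedness of expressions with respect to a list of bound variables. -/
inductive ClosedE (Γ : List VarName) : Expr → Prop where
  | val (v : Val) : ClosedE Γ (.val v)
  | var {x : VarName} : x ∈ Γ → ClosedE Γ (.var x)
  | select {e : Expr} (f : FieldName) : ClosedE Γ e → ClosedE Γ (.select e f)
  | newObj {fs : List (FieldName × Expr)} :
      (∀ fe ∈ fs, ClosedE Γ fe.2) → ClosedE Γ (.newObj fs)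
  | globalref {e : Expr} : ClosedE Γ e → ClosedE Γ (.globalref e)
  | valof {e : Expr} : ClosedE Γ e → ClosedE Γ (.valof e)

/-- Closedness of statements with respect to a list of bound variables. -/
inductive Closed : List VarName → Stmt → Prop where
  | skip {Γ : List VarName} : Closed Γ .skip
  | throw {Γ : List VarName} (v : Val) : Closed Γ (.throw v)
  | bind {Γ : List VarName} {x : VarName} {e : Expr} {s : Stmt} :
      ClosedE Γ e → Closed (x :: Γ) s → Closed Γ (.bind x e s)
  | assign {Γ : List VarName} {e1 : Expr} {f : FieldName} {e2 : Expr} :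
      ClosedE Γ e1 → ClosedE Γ e2 → Closed Γ (.assign e1 f e2)
  | seq {Γ : List VarName} {s t : Stmt} : Closed Γ s → Closed Γ t → Closed Γ (.seq s t)
  | atE {Γ : List VarName} {p : Place} {x : VarName} {e : Expr} {s : Stmt} :
      ClosedE Γ e → Closed (x :: Γ) s → Closed Γ (.atE p x e s)
  | async {Γ : List VarName} {s : Stmt} : Closed Γ s → Closed Γ (.async s)
  | finish {Γ : List VarName} {μ : List Val} {s : Stmt} : Closed Γ s → Closed Γ (.finish μ s)
  | tryCatch {Γ : List VarName} {s t : Stmt} : Closed Γ s → Closed Γ t → Closed Γ (.tryCatch s t)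
  | atD {Γ : List VarName} {p : Place} {s : Stmt} : Closed Γ s → Closed Γ (.atD p s)
  | spawned {Γ : List VarName} {s : Stmt} : Closed Γ s → Closed Γ (.spawned s)

/-- All local heaps of `g` have finite domains (as is the case for heaps built at runtime). -/
def FiniteHeaps (g : GHeap) : Prop :=
  ∀ p h, g p = some h → Set.Finite {o : ObjId | h o ≠ none}

/-- A value is an admissible reference at place `q` in local heap `h`:
local object ids must be `q`-local and allocated; global references are unrestricted. -/
def okRef (q : Place) (h : Heap) : Val → Prop
  | .obj a => home a = q ∧ h a ≠ none
  | _ => True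

/-- Place-locality of a global heap. -/
def PlaceLocalG (g : GHeap) : Prop :=
  ∀ q h, g q = some h → ∀ o : ObjId, h o ≠ none →
    home o = q ∧ ∀ w, Reach h (.obj o) w → okRef q h w

/-- Values occurring in an expression. -/
inductive OccE : Expr → Val → Prop where
  | val (v : Val) : OccE (.val v) v
  | select {e : Expr} {v : Val} (f : FieldName) : OccE e v → OccE (.select e f) v
  | newObj {fs : List (FieldName × Expr)} {fe : FieldName × Expr} {v : Val} :
      fe ∈ fs → OccE fe.2 v → OccE (.newObj fs) v
  | globalref {e : Expr} {v : Val} : OccE e v → OccE (.globalref e) v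
  | valof {e : Expr} {v : Val} : OccE e v → OccE (.valof e) v

/-- Values occurring anywhere in a statement. -/
inductive OccS : Stmt → Val → Prop where
  | throw (v : Val) : OccS (.throw v) v
  | bindE {x e s v} : OccE e v → OccS (.bind x e s) v
  | bindS {x e s v} : OccS s v → OccS (.bind x e s) v
  | assignL {e1 f e2 v} : OccE e1 v → OccS (.assign e1 f e2) v
  | assignR {e1 f e2 v} : OccE e2 v → OccS (.assign e1 f e2) v
  | seqL {s t v} : OccS s v → OccS (.seq s t) v
  | seqR {s t v} : OccS t v → OccS (.seq s t) v
  | atEE {p x e s v} : OccE e v → OccS (.atE p x e s) v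
  | atES {p x e s v} : OccS s v → OccS (.atE p x e s) v
  | async {s v} : OccS s v → OccS (.async s) v
  | finishMu {μ s v} : v ∈ μ → OccS (.finish μ s) v
  | finishS {μ s v} : OccS s v → OccS (.finish μ s) v
  | tryL {s t v} : OccS s v → OccS (.tryCatch s t) v
  | tryR {s t v} : OccS t v → OccS (.tryCatch s t) v
  | atD {p s v} : OccS s v → OccS (.atD p s) v
  | spawned {s v} : OccS s v → OccS (.spawned s) v

/-- Values occurring in a statement *not* under any `at`/`atD` construct. -/
inductive OccTop : Stmt → Val → Prop where
  | throw (v : Val) : OccTop (.throw v) v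
  | bindE {x e s v} : OccE e v → OccTop (.bind x e s) v
  | bindS {x e s v} : OccTop s v → OccTop (.bind x e s) v
  | assignL {e1 f e2 v} : OccE e1 v → OccTop (.assign e1 f e2) v
  | assignR {e1 f e2 v} : OccE e2 v → OccTop (.assign e1 f e2) v
  | seqL {s t v} : OccTop s v → OccTop (.seq s t) v
  | seqR {s t v} : OccTop t v → OccTop (.seq s t) v
  | atEE {p x e s v} : OccE e v → OccTop (.atE p x e s) v
  | async {s v} : OccTop s v → OccTop (.async s) v
  | finishMu {μ s v} : v ∈ μ → OccTop (.finish μ s) v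
  | finishS {μ s v} : OccTop s v → OccTop (.finish μ s) v
  | tryL {s t v} : OccTop s v → OccTop (.tryCatch s t) v
  | tryR {s t v} : OccTop t v → OccTop (.tryCatch s t) v
  | spawned {s v} : OccTop s v → OccTop (.spawned s) v

/-- `OccUnder s p v`: value `v` occurs in `s` with innermost enclosing `at` place `p`. -/
inductive OccUnder : Stmt → Place → Val → Prop where
  | atETop {p x e s v} : OccTop s v → OccUnder (.atE p x e s) p v
  | atEDeep {p x e s q v} : OccUnder s q v → OccUnder (.atE p x e s) q v
  | atDTop {p s v} : OccTop s v → OccUnder (.atD p s) p v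
  | atDDeep {p s q v} : OccUnder s q v → OccUnder (.atD p s) q v
  | bindS {x e s q v} : OccUnder s q v → OccUnder (.bind x e s) q v
  | seqL {s t q v} : OccUnder s q v → OccUnder (.seq s t) q v
  | seqR {s t q v} : OccUnder t q v → OccUnder (.seq s t) q v
  | async {s q v} : OccUnder s q v → OccUnder (.async s) q v
  | finishS {μ s q v} : OccUnder s q v → OccUnder (.finish μ s) q v
  | tryL {s t q v} : OccUnder s q v → OccUnder (.tryCatch s t) q v
  | tryR {s t q v} : OccUnder t q v → OccUnder (.tryCatch s t) q v
  | spawned {s q v} : OccUnder s q v → OccUnder (.spawned s) q v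

/-- Place-locality of a configuration `⟨s,g⟩`. -/
def ConfLocal (s : Stmt) (g : GHeap) : Prop :=
  PlaceLocalG g ∧
  (∀ (p : Place) (o : ObjId), OccUnder s p (.obj o) → ∃ h, g p = some h ∧ h o ≠ none) ∧
  (∀ a : ObjId, OccS s (.gref a) → ∃ h, g (home a) = some h ∧ h a ≠ none)

/-- Evaluation contexts. -/
inductive ECtx : (Stmt → Stmt) → Prop where
  | hole : ECtx id
  | seqL {E : Stmt → Stmt} (t : Stmt) : ECtx E → ECtx (fun s => .seq (E s) t)
  | seqR {E : Stmt → Stmt} {t : Stmt} : isAsync t → ECtx E → ECtx (fun s => .seq t (E s))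
  | atD {E : Stmt → Stmt} (p : Place) : ECtx E → ECtx (fun s => .atD p (E s))
  | spawned {E : Stmt → Stmt} : ECtx E → ECtx (fun s => .spawned (E s))
  | finish {E : Stmt → Stmt} (μ : List Val) : ECtx E → ECtx (fun s => .finish μ (E s))
  | tryCatch {E : Stmt → Stmt} (t : Stmt) : ECtx E → ECtx (fun s => .tryCatch (E s) t)

/-- One step between configurations. -/
def CStep (res : Bool) (p : Place) (l : Label) (k k' : Config) : Prop :=
  ∃ s g, k = .run s g ∧ Step res p s g l k'

/-- Any number of ε-steps. -/
def EpsStar (res : Bool) (p : Place) : Config → Config → Prop :=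
  Relation.ReflTransGen (CStep res p .eps)

/-- Weak transition `==λ==>_p`. -/
def WStep (res : Bool) (p : Place) (l : Label) (k k' : Config) : Prop :=
  match l with
  | .eps => EpsStar res p k k'
  | _ => ∃ k1 k2, EpsStar res p k k1 ∧ CStep res p l k1 k2 ∧ EpsStar res p k2 k'

/-- Environment moves: concurrent-context updates of the shared heap.  For TX10
(`res = false`) the domain of places is preserved; for Resilient TX10 (`res = true`)
the domain may shrink (places may fail). -/
def EnvMove (res : Bool) (Φ : GHeap → GHeap) : Prop :=
  (∀ g, PlaceLocalG g → PlaceLocalG (Φ g)) ∧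
  (∀ g p, if res then ((Φ g p).isSome → (g p).isSome) else ((Φ g p).isSome ↔ (g p).isSome)) ∧
  (∀ g p h h', g p = some h → Φ g p = some h' → ∀ o : ObjId, h o ≠ none → h' o ≠ none)

/-- `R` is a weak bisimulation on closed configurations. -/
def IsWeakBisim (res : Bool) (R : Config → Config → Prop) : Prop :=
  ∀ k1 k2, R k1 k2 →
    ((∃ g, k1 = .done g ∧ k2 = .done g) ∨
     (∃ s t g, k1 = .run s g ∧ k2 = .run t g ∧
       (isSync s ↔ isSync t) ∧
       (∀ Φ, EnvMove res Φ → ∀ p : Place,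
         (∀ l s' g', Step res p s (Φ g) l (.run s' g') →
            ∃ t', WStep res p l (.run t (Φ g)) (.run t' g') ∧ R (.run s' g') (.run t' g')) ∧
         (∀ l g', Step res p s (Φ g) l (.done g') → WStep res p l (.run t (Φ g)) (.done g')) ∧
         (∀ l t' g', Step res p t (Φ g) l (.run t' g') →
            ∃ s', WStep res p l (.run s (Φ g)) (.run s' g') ∧ R (.run s' g') (.run t' g')) ∧
         (∀ l g', Step res p t (Φ g) l (.done g') → WStep res p l (.run s (Φ g)) (.done g')))))

/-- Weak bisimilarity: the largest weak bisimulation. -/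
def Bisim (res : Bool) (k1 k2 : Config) : Prop :=
  ∃ R, IsWeakBisim res R ∧ R k1 k2

/-- Statement contexts built from the TX10 constructs. -/
inductive SCtx : (Stmt → Stmt) → Prop where
  | hole : SCtx id
  | seqL {C : Stmt → Stmt} (t : Stmt) : SCtx C → SCtx (fun s => .seq (C s) t)
  | seqR {C : Stmt → Stmt} (t : Stmt) : SCtx C → SCtx (fun s => .seq t (C s))
  | async {C : Stmt → Stmt} : SCtx C → SCtx (fun s => .async (C s))
  | spawned {C : Stmt → Stmt} : SCtx C → SCtx (fun s => .spawned (C s))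
  | finish {C : Stmt → Stmt} (μ : List Val) : SCtx C → SCtx (fun s => .finish μ (C s))
  | atE {C : Stmt → Stmt} (p : Place) (x : VarName) (e : Expr) :
      SCtx C → SCtx (fun s => .atE p x e (C s))
  | atD {C : Stmt → Stmt} (p : Place) : SCtx C → SCtx (fun s => .atD p (C s))
  | tryL {C : Stmt → Stmt} (t : Stmt) : SCtx C → SCtx (fun s => .tryCatch (C s) t)
  | tryR {C : Stmt → Stmt} (t : Stmt) : SCtx C → SCtx (fun s => .tryCatch t (C s))

/-- `s` has no sub-term of the form `async s'`. -/
def NoAsync : Stmt → Prop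
  | .skip => True
  | .throw _ => True
  | .bind _ _ s => NoAsync s
  | .assign _ _ _ => True
  | .seq s t => NoAsync s ∧ NoAsync t
  | .atE _ _ _ s => NoAsync s
  | .async _ => False
  | .finish _ s => NoAsync s
  | .tryCatch s t => NoAsync s ∧ NoAsync t
  | .atD _ s => NoAsync s
  | .spawned s => NoAsync s

/-- `s` has no active remote computation: no substatement of the form `atD q s'`. -/
def IsLocalS : Stmt → Prop
  | .skip => True
  | .throw _ => True
  | .bind _ _ s => IsLocalS s
  | .assign _ _ _ => True
  | .seq s t => IsLocalS s ∧ IsLocalS t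
  | .atE _ _ _ s => IsLocalS s
  | .async s => IsLocalS s
  | .finish _ s => IsLocalS s
  | .tryCatch s t => IsLocalS s ∧ IsLocalS t
  | .atD _ _ => False
  | .spawned s => IsLocalS s

/-- `IsRemote p s`: every basic statement of `s` occurs under `atD q` for some `q ≠ p`. -/
inductive IsRemote (p : Place) : Stmt → Prop where
  | atD {q : Place} {s : Stmt} : q ≠ p → IsRemote p (.atD q s)
  | seq {s t : Stmt} : IsRemote p s → IsRemote p t → IsRemote p (.seq s t)
  | spawned {s : Stmt} : IsRemote p s → IsRemote p (.spawned s)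
  | finish {μ : List Val} {s : Stmt} : IsRemote p s → IsRemote p (.finish μ s)
  | tryCatch {s t : Stmt} : IsRemote p s → IsRemote p t → IsRemote p (.tryCatch s t)

/-- Substatement relation (reflexive containment). -/
inductive SubStmt : Stmt → Stmt → Prop where
  | refl (s : Stmt) : SubStmt s s
  | bind {u s : Stmt} {x e} : SubStmt u s → SubStmt u (.bind x e s)
  | seqL {u s t : Stmt} : SubStmt u s → SubStmt u (.seq s t)
  | seqR {u s t : Stmt} : SubStmt u t → SubStmt u (.seq s t)
  | atE {u s : Stmt} {p x e} : SubStmt u s → SubStmt u (.atE p x e s)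
  | async {u s : Stmt} : SubStmt u s → SubStmt u (.async s)
  | finish {u s : Stmt} {μ} : SubStmt u s → SubStmt u (.finish μ s)
  | tryL {u s t : Stmt} : SubStmt u s → SubStmt u (.tryCatch s t)
  | tryR {u s t : Stmt} : SubStmt u t → SubStmt u (.tryCatch s t)
  | atD {u s : Stmt} {p} : SubStmt u s → SubStmt u (.atD p s)
  | spawned {u s : Stmt} : SubStmt u s → SubStmt u (.spawned s)

/-- Application of a variable substitution (a finite list of bindings). -/
def applySub (ρ : List (VarName × Val)) (s : Stmt) : Stmt :=
  ρ.foldr (fun xv t => subst xv.1 xv.2 t) s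

/-- The happens-before relation of `s1, s2` inside program `s0`, for the semantics
selected by `res` (traces are sequences of transitions at place 0). -/
def HB (res : Bool) (s0 s1 s2 : Stmt) : Prop :=
  ∀ (n : ℕ) (S : ℕ → Config) (g0 : GHeap),
    S 0 = .run s0 g0 →
    (∀ i, i < n → ∃ l, CStep res 0 l (S i) (S (i+1))) →
    (∃ (E : Stmt → Stmt) (ρ : List (VarName × Val)) (g : GHeap),
        ECtx E ∧ S n = .run (E (applySub ρ s2)) g) →
    ∃ i, i ≤ n ∧ ∃ (E' : Stmt → Stmt) (ρ' : List (VarName × Val)) (g' : GHeap),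
        ECtx E' ∧ S i = .run (E' (applySub ρ' s1)) g'

/-- A value is well-formed in `g`: the object graph rooted at it has no dangling pointers. -/
def WFVal (v : Val) (g : GHeap) : Prop :=
  ∀ o : ObjId, v = Val.obj o →
    ∃ h, g (home o) = some h ∧ ∀ a : ObjId, Reach h (.obj o) (.obj a) → h a ≠ none

/-!
An asynchronous statement never raises a synchronous exception: `async` masks them, and the
other constructors of `isAsync` only propagate labels of asynchronous parts. Hence a `try`
around an asynchronous statement never enters its handler, and every other step of an
asynchronous statement rebuilds an asynchronous one. Synchrony is then reflected because every
statement is either asynchronous or synchronous, and not both.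
-/

theorem isAsync.not_isSync {s : Stmt} (ha : isAsync s) : ¬ isSync s := by
  induction ha with
  | spawned => intro hs; cases hs
  | atD _ _ ih => intro hs; cases hs with | atD _ hs => exact ih hs
  | tryCatch _ _ ih => intro hs; cases hs with | tryCatch _ hs => exact ih hs
  | seq _ _ ih₁ ih₂ =>
    intro hs
    cases hs with
    | seqL _ hs => exact ih₁ hs
    | seqR _ hs => exact ih₂ hs

theorem isAsync_or_isSync (s : Stmt) : isAsync s ∨ isSync s := by
  induction s with
  | skip => exact .inr .skip
  | throw v => exact .inr (.throw v)
  | bind x e s _ => exact .inr (.bind x e s)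
  | assign e₁ f e₂ => exact .inr (.assign e₁ f e₂)
  | seq s t ihs iht =>
    rcases ihs with hs | hs
    · exact iht.imp (.seq hs) (.seqR s)
    · exact .inr (.seqL t hs)
  | atE p x e s _ => exact .inr (.atE p x e s)
  | async s _ => exact .inr (.async s)
  | finish μ s _ => exact .inr (.finish μ s)
  | tryCatch s t ihs _ => exact ihs.imp (.tryCatch t) (.tryCatch t)
  | atD p s ihs => exact ihs.imp (.atD p) (.atD p)
  | spawned s _ => exact .inl (.spawned s)

theorem isNotSync_maskAsync (l : Label) : isNotSync (maskAsync l) := by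
  cases l <;> trivial

theorem isNotSync.atLabel {l : Label} (hl : isNotSync l) (dead : Bool) :
    isNotSync (atLabel dead l) := by
  cases l with
  | excS => exact absurd hl id
  | _ => trivial

theorem Step.isNotSync_of_isAsync {res : Bool} {p : Place} {s : Stmt} {g : GHeap} {l : Label}
    {k : Config} (h : Step res p s g l k) (ha : isAsync s) : isNotSync l := by
  induction h with
  | asyncRun => exact isNotSync_maskAsync _
  | asyncDone => exact isNotSync_maskAsync _
  | atRun _ ih => cases ha with | atD _ hs => exact (ih hs).atLabel _
  | atDone _ ih => cases ha with | atD _ hs => exact (ih hs).atLabel _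
  | seqStep _ hl => exact hl
  | seqTerm _ _ hl => exact hl
  | seqStepSync _ ih => cases ha with | seq hs _ => exact ih hs
  | seqTermSync _ _ ih => cases ha with | seq hs _ => exact ih hs
  | par _ _ ih => cases ha with | seq _ ht => exact ih ht
  | parTerm _ _ ih => cases ha with | seq _ ht => exact ih ht
  | seqFailedSync _ hsync => cases ha with | seq hs _ => exact absurd hsync hs.not_isSync
  | seqFailedAsync => trivial
  | tryStep _ hl => exact hl
  | tryStepDone _ hl => exact hl
  | tryHandle => trivial
  | tryHandleDone => trivial
  | tryDead _ _ ih => cases ha with | tryCatch _ hs => exact ih hs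
  | tryDeadDone _ _ ih => cases ha with | tryCatch _ hs => exact ih hs
  | placeFailure => trivial
  | _ => cases ha

theorem Step.isAsync_of_isAsync {res : Bool} {p : Place} {s : Stmt} {g : GHeap} {l : Label}
    {s' : Stmt} {g' : GHeap} (h : Step res p s g l (.run s' g')) (ha : isAsync s) :
    isAsync s' := by
  generalize hk : Config.run s' g' = k at h
  induction h generalizing s' g' with
  | asyncRun => cases hk; exact .spawned _
  | seqStep _ _ ih => cases hk; cases ha with | seq hs ht => exact .seq (ih hs rfl) ht
  | seqStepSync _ ih => cases hk; cases ha with | seq hs _ => exact ih hs rfl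
  | seqTerm => cases hk; cases ha with | seq _ ht => exact ht
  | par _ _ ih => cases hk; cases ha with | seq hs ht => exact .seq hs (ih ht rfl)
  | parTerm ht => cases hk; exact ht
  | seqFailedAsync => cases hk; cases ha with | seq _ ht => exact ht
  | atRun _ ih => cases hk; cases ha with | atD _ hs => exact .atD _ (ih hs rfl)
  | tryStep _ _ ih => cases hk; cases ha with | tryCatch _ hs => exact .tryCatch _ (ih hs rfl)
  | tryHandle _ hstep | tryHandleDone _ hstep | tryDead _ hstep =>
    cases ha with | tryCatch _ hs => exact absurd (hstep.isNotSync_of_isAsync hs) id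
  | placeFailure => cases hk; exact ha
  | _ => cases ha <;> cases hk

/-- transitions preserve asynchrony (equivalently, reflect synchrony). -/
theorem async_preserved {p : Place} {s : Stmt} {g : GHeap} {l : Label} {s' : Stmt} {g' : GHeap}
    (h : Step false p s g l (.run s' g')) :
    (isAsync s → isAsync s') ∧ (isSync s' → isSync s) := by
  refine ⟨h.isAsync_of_isAsync, fun hs' => ?_⟩
  exact (isAsync_or_isSync s).resolve_left fun ha => (h.isAsync_of_isAsync ha).not_isSync hs'

end TX10
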